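/- arXiv:2011.13259 — 2 statements merged into one kernel-verified Lean document; each statement's English description precedes it below -/
import Mathlib

section
/- Let ψ(y) = max_{x∈ℝⁿ}{⟨Aᵀy, x⟩ − f(x)} be the dual function of the μ-strongly convex function f with linear operator A. If y^N satisfies ‖∇ψ(y^N)‖₂ ≤ ε/R_y and ‖y^N‖₂ ≤ 2R_y, where R_y = ‖y*‖₂ for a minimizer y* of ψ, then the primal point x^N = x(Aᵀy^N) = argmax_x{⟨Aᵀy^N, x⟩ − f(x)} satisfies f(x^N) − f(x*) ≤ 2ε and ‖Ax^N‖₂ ≤ ε/R_y, where x* is any minimizer of f over {x : Ax = 0}. -/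
open Matrix Finset

noncomputable def enormR {m : ℕ} (x : Fin m → ℝ) : ℝ := Real.sqrt (∑ i, (x i) ^ 2)

lemma dotProduct_le_enormR_mul_enormR {m : ℕ} (a b : Fin m → ℝ) :
    a ⬝ᵥ b ≤ enormR a * enormR b :=
  Real.sum_mul_le_sqrt_mul_sqrt _ a b

lemma enormR_nonneg {m : ℕ} (x : Fin m → ℝ) : 0 ≤ enormR x := Real.sqrt_nonneg _

/-- Weak duality: `⟨Aᵀy, x⋆⟩ = ⟨y, Ax⋆⟩` vanishes at every feasible `x⋆`. -/
lemma sub_le_dotProduct_mulVec_of_maximizes {m n R : Type*} [Fintype m] [Fintype n]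
    [CommRing R] [LinearOrder R] [IsStrictOrderedRing R]
    (f : (n → R) → R) (A : Matrix m n R) (y : m → R) (x xstar : n → R)
    (hmax : ∀ x', (Aᵀ *ᵥ y) ⬝ᵥ x' - f x' ≤ (Aᵀ *ᵥ y) ⬝ᵥ x - f x)
    (hfeas : A *ᵥ xstar = 0) :
    f x - f xstar ≤ y ⬝ᵥ (A *ᵥ x) := by
  have hpair : ∀ x', (Aᵀ *ᵥ y) ⬝ᵥ x' = y ⬝ᵥ (A *ᵥ x') := fun x' => by
    rw [dotProduct_comm, dotProduct_transpose_mulVec]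
  have h := hmax xstar
  rw [hpair, hpair, hfeas, dotProduct_zero] at h
  linarith

theorem dual_gradient_certificate_general {n d : ℕ} (ε Ry : ℝ)
    (hRy : 0 < Ry)
    (f : (Fin n → ℝ) → ℝ)
    (A : Matrix (Fin d) (Fin n) ℝ)
    (xmap : (Fin n → ℝ) → (Fin n → ℝ))
    (hxmap : ∀ z x, dotProduct z x - f x ≤ dotProduct z (xmap z) - f (xmap z))
    (yN : Fin d → ℝ)
    (hgrad : enormR (A *ᵥ xmap (Aᵀ *ᵥ yN)) ≤ ε / Ry)
    (hyN : enormR yN ≤ 2 * Ry)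
    (xstar : Fin n → ℝ) (hfeas : A *ᵥ xstar = 0) :
    f (xmap (Aᵀ *ᵥ yN)) - f xstar ≤ 2 * ε ∧
    enormR (A *ᵥ xmap (Aᵀ *ᵥ yN)) ≤ ε / Ry := by
  refine ⟨?_, hgrad⟩
  set xN := xmap (Aᵀ *ᵥ yN)
  calc f xN - f xstar
      ≤ yN ⬝ᵥ (A *ᵥ xN) := sub_le_dotProduct_mulVec_of_maximizes f A yN xN xstar (hxmap _) hfeas
    _ ≤ enormR yN * enormR (A *ᵥ xN) := dotProduct_le_enormR_mul_enormR _ _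
    _ ≤ 2 * Ry * (ε / Ry) := mul_le_mul hyN hgrad (enormR_nonneg _) (by positivity)
    _ = 2 * ε := by field_simp

/-- If the dual iterate `y^N` has small dual gradient `‖∇ψ(y^N)‖₂ = ‖A x(Aᵀy^N)‖₂ ≤ ε/R_y`
and `‖y^N‖₂ ≤ 2 R_y`, then the primal point `x^N = x(Aᵀ y^N)` is a good approximate
solution of `min_{Ax=0} f(x)`: `f(x^N) − f(x*) ≤ 2ε` and `‖A x^N‖₂ ≤ ε/R_y`. -/
theorem dual_gradient_certificate {n d : ℕ} (μ ε Ry : ℝ)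
    (hμ : 0 < μ) (hε : 0 < ε) (hRy : 0 < Ry)
    (f : (Fin n → ℝ) → ℝ)
    (hsc : ∀ (x y : Fin n → ℝ) (a b : ℝ), 0 ≤ a → 0 ≤ b → a + b = 1 →
      f (a • x + b • y) ≤ a * f x + b * f y - μ / 2 * a * b * (enormR (x - y)) ^ 2)
    (A : Matrix (Fin d) (Fin n) ℝ)
    (xmap : (Fin n → ℝ) → (Fin n → ℝ))
    (hxmap : ∀ z x, dotProduct z x - f x ≤ dotProduct z (xmap z) - f (xmap z))
    (ψ : (Fin d → ℝ) → ℝ)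
    (hψ : ∀ y, ψ y = dotProduct (Aᵀ *ᵥ y) (xmap (Aᵀ *ᵥ y)) - f (xmap (Aᵀ *ᵥ y)))
    (ystar : Fin d → ℝ) (hystar : ∀ y, ψ ystar ≤ ψ y) (hRydef : enormR ystar = Ry)
    (yN : Fin d → ℝ)
    (hgrad : enormR (A *ᵥ xmap (Aᵀ *ᵥ yN)) ≤ ε / Ry)
    (hyN : enormR yN ≤ 2 * Ry)
    (xstar : Fin n → ℝ) (hfeas : A *ᵥ xstar = 0)
    (hopt : ∀ x, A *ᵥ x = 0 → f xstar ≤ f x) :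
    f (xmap (Aᵀ *ᵥ yN)) - f xstar ≤ 2 * ε ∧
    enormR (A *ᵥ xmap (Aᵀ *ᵥ yN)) ≤ ε / Ry :=
  dual_gradient_certificate_general ε Ry hRy f A xmap hxmap yN hgrad hyN xstar hfeas
end

section
/- For the two-point zeroth-order estimator f̃'_r(x,ξ,e) = (n/(2r))(f̃(x+re,ξ) − f̃(x−re,ξ)) e with f̃(x,ξ) = f(x,ξ) + Δ(x), |Δ(x)| ≤ Δ, the bias relative to the gradient of the smoothed function F(x) = 𝔼_e[f(x+re)] satisfies ‖𝔼[f̃'_r(x,ξ,e)] − ∇F(x)‖_* ≤ nΔ p_*/r, where p_* bounds ⁴√(𝔼[‖e‖_*⁴]). -/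
/-!
The noise averages out and, by the symmetry of `e`, the two `f`-terms of the estimator together
reproduce `∇F(x)`, so the bias is `(n/(2r)) 𝔼[(Δ(x+re) − Δ(x−re)) e]`. Jensen's inequality for
the convex function `‖·‖_*` bounds each of the two terms by `Δ 𝔼‖e‖_*`, and
`𝔼‖e‖_* ≤ (𝔼‖e‖_*⁴)^{1/4} ≤ p_*` by Jensen again.
-/

open MeasureTheory

theorem integral_mul_sub_smul_eq {Ω E : Type*} [MeasurableSpace Ω] {μ : Measure Ω}
    [NormedAddCommGroup E] [NormedSpace ℝ E] (c : ℝ) {a₁ a₂ b₁ b₂ : Ω → ℝ} {v : Ω → E}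
    (ha₁ : Integrable (fun ω => a₁ ω • v ω) μ) (ha₂ : Integrable (fun ω => a₂ ω • v ω) μ)
    (hb₁ : Integrable (fun ω => b₁ ω • v ω) μ) (hb₂ : Integrable (fun ω => b₂ ω • v ω) μ) :
    ∫ ω, (c * ((a₁ ω + b₁ ω) - (a₂ ω + b₂ ω))) • v ω ∂μ =
      c • ((∫ ω, a₁ ω • v ω ∂μ - ∫ ω, a₂ ω • v ω ∂μ) +
        (∫ ω, b₁ ω • v ω ∂μ - ∫ ω, b₂ ω • v ω ∂μ)) := by
  simp only [mul_smul, sub_smul, add_smul]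
  rw [integral_smul, integral_sub ?_ ?_, integral_add ha₁ hb₁, integral_add ha₂ hb₂]
  · module
  · exact ha₁.add hb₁
  · exact ha₂.add hb₂

section SeminormIntegral

variable {Ω E : Type*} [MeasurableSpace Ω] {μ : Measure Ω} [IsProbabilityMeasure μ]

theorem integral_le_of_integral_pow_le {X : Ω → ℝ} {k : ℕ} {c : ℝ} (hk : k ≠ 0) (hc : 0 ≤ c)
    (hX₀ : ∀ᵐ ω ∂μ, 0 ≤ X ω) (hX : Integrable X μ) (hXk : Integrable (fun ω => X ω ^ k) μ)
    (h : ∫ ω, X ω ^ k ∂μ ≤ c ^ k) : ∫ ω, X ω ∂μ ≤ c :=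
  le_of_pow_le_pow_left₀ hk hc <| ((convexOn_pow k).map_integral_le
    (continuous_pow k).continuousOn isClosed_Ici hX₀ hX hXk).trans h

variable [NormedAddCommGroup E] [NormedSpace ℝ E] [FiniteDimensional ℝ E]

namespace Seminorm

theorem continuous_of_finiteDimensional (p : Seminorm ℝ E) : Continuous p :=
  continuousOn_univ.1 (p.convexOn.continuousOn isOpen_univ)

theorem map_integral_le (p : Seminorm ℝ E) {g : Ω → E} (hg : Integrable g μ)
    (hpg : Integrable (fun ω => p (g ω)) μ) : p (∫ ω, g ω ∂μ) ≤ ∫ ω, p (g ω) ∂μ :=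
  p.convexOn.map_integral_le p.continuous_of_finiteDimensional.continuousOn isClosed_univ
    (ae_of_all _ fun _ => Set.mem_univ _) hg hpg

theorem map_integral_smul_le (p : Seminorm ℝ E) {a : Ω → ℝ} {v : Ω → E} {Δ : ℝ}
    (ha : ∀ ω, |a ω| ≤ Δ) (hav : Integrable (fun ω => a ω • v ω) μ)
    (hpv : Integrable (fun ω => p (v ω)) μ) :
    p (∫ ω, a ω • v ω ∂μ) ≤ Δ * ∫ ω, p (v ω) ∂μ := by
  have hle : ∀ ω, p (a ω • v ω) ≤ Δ * p (v ω) := fun ω => by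
    rw [map_smul_eq_mul, Real.norm_eq_abs]
    exact mul_le_mul_of_nonneg_right (ha ω) (apply_nonneg p _)
  have hpav : Integrable (fun ω => p (a ω • v ω)) μ :=
    (hpv.const_mul Δ).mono'
      (p.continuous_of_finiteDimensional.comp_aestronglyMeasurable hav.aestronglyMeasurable)
      (ae_of_all _ fun ω => by rw [Real.norm_of_nonneg (apply_nonneg p _)]; exact hle ω)
  calc p (∫ ω, a ω • v ω ∂μ) ≤ ∫ ω, p (a ω • v ω) ∂μ := p.map_integral_le hav hpav
    _ ≤ ∫ ω, Δ * p (v ω) ∂μ := integral_mono hpav (hpv.const_mul Δ) hle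
    _ = Δ * ∫ ω, p (v ω) ∂μ := integral_const_mul Δ _

theorem integral_le_of_integral_pow_le_of_norm_eq_one (p : Seminorm ℝ E) {v : Ω → E}
    (hv : ∀ᵐ ω ∂μ, ‖v ω‖ = 1) (hpv : Integrable (fun ω => p (v ω)) μ) {k : ℕ} (hk : k ≠ 0)
    {c : ℝ} (hc : 0 ≤ c) (h : ∫ ω, p (v ω) ^ k ∂μ ≤ c ^ k) : ∫ ω, p (v ω) ∂μ ≤ c := by
  obtain ⟨C, hC⟩ := (isCompact_sphere (0 : E) 1).exists_bound_of_continuousOn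
    p.continuous_of_finiteDimensional.continuousOn
  have hpvk : Integrable (fun ω => p (v ω) ^ k) μ := by
    refine Integrable.of_bound (hpv.aestronglyMeasurable.pow k) (C ^ k) ?_
    filter_upwards [hv] with ω hω
    rw [norm_pow]
    exact pow_le_pow_left₀ (norm_nonneg _) (hC _ (by simpa using hω)) k
  exact integral_le_of_integral_pow_le hk hc (ae_of_all _ fun ω => apply_nonneg p _) hpv hpvk h

end Seminorm

end SeminormIntegral

theorem two_point_estimator_bias_general {n : ℕ} {Ω : Type*} [MeasurableSpace Ω]
    (ℙ : Measure Ω) [IsProbabilityMeasure ℙ]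
    (e : Ω → EuclideanSpace ℝ (Fin n))
    (he : ∀ᵐ ω ∂ℙ, ‖e ω‖ = 1)
    (r Δ pstar : ℝ) (hr : 0 < r) (hΔ : 0 ≤ Δ) (hp : 0 ≤ pstar)
    -- the dual norm ‖·‖_* of the chosen norm ‖·‖
    (dnorm : EuclideanSpace ℝ (Fin n) → ℝ)
    (hdadd : ∀ x y, dnorm (x + y) ≤ dnorm x + dnorm y)
    (hdsmul : ∀ (c : ℝ) x, dnorm (c • x) = |c| * dnorm x)
    (hpstar : ∫ ω, (dnorm (e ω)) ^ 4 ∂ℙ ≤ pstar ^ 4)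
    (f : EuclideanSpace ℝ (Fin n) → ℝ)
    (fξ : EuclideanSpace ℝ (Fin n) → Ω → ℝ)   -- stochastic realizations f(z,ξ)
    (Δfun : EuclideanSpace ℝ (Fin n) → ℝ) (hΔfun : ∀ z, |Δfun z| ≤ Δ)
    (x : EuclideanSpace ℝ (Fin n))
    -- the noise ξ is independent of e and unbiased
    (hnoise : ∀ c : ℝ, ∫ ω, (fξ (x + c • e ω) ω) • e ω ∂ℙ =
      ∫ ω, (f (x + c • e ω)) • e ω ∂ℙ)
    -- the direction e is symmetrically distributed
    (hsym : ∫ ω, (f (x - r • e ω)) • e ω ∂ℙ = - ∫ ω, (f (x + r • e ω)) • e ω ∂ℙ)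
    (est : Ω → EuclideanSpace ℝ (Fin n))
    (hest : ∀ ω, est ω = ((n : ℝ) / (2 * r) *
      ((fξ (x + r • e ω) ω + Δfun (x + r • e ω)) -
       (fξ (x - r • e ω) ω + Δfun (x - r • e ω)))) • e ω)
    (gradF : EuclideanSpace ℝ (Fin n))
    (hgradF : gradF = ∫ ω, ((n : ℝ) / r * f (x + r • e ω)) • e ω ∂ℙ)
    (hint_fξ : ∀ c : ℝ, Integrable (fun ω => (fξ (x + c • e ω) ω) • e ω) ℙ)
    (hint_Δ : ∀ c : ℝ, Integrable (fun ω => (Δfun (x + c • e ω)) • e ω) ℙ)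
    (hint_d : Integrable (fun ω => dnorm (e ω)) ℙ) :
    dnorm ((∫ ω, est ω ∂ℙ) - gradF) ≤ n * Δ * pstar / r := by
  let p : Seminorm ℝ (EuclideanSpace ℝ (Fin n)) := Seminorm.of dnorm hdadd hdsmul
  have hminus : ∀ ω, x - r • e ω = x + (-r) • e ω := fun ω => by rw [neg_smul, sub_eq_add_neg]
  have hint_fξ' := hint_fξ (-r)
  have hint_Δ' := hint_Δ (-r)
  have hnoise' := hnoise (-r)
  simp only [← hminus] at hint_fξ' hint_Δ' hnoise'
  set A := ∫ ω, Δfun (x + r • e ω) • e ω ∂ℙ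
  set B := ∫ ω, Δfun (x - r • e ω) • e ω ∂ℙ
  have hbias : (∫ ω, est ω ∂ℙ) - gradF = ((n : ℝ) / (2 * r)) • (A - B) := by
    rw [funext hest, integral_mul_sub_smul_eq _ (hint_fξ r) hint_fξ' (hint_Δ r) hint_Δ', hgradF]
    simp only [mul_smul, integral_smul]
    rw [hnoise r, hnoise', hsym, show (n : ℝ) / r = 2 * ((n : ℝ) / (2 * r)) by field_simp]
    module
  have hmoment : ∫ ω, dnorm (e ω) ∂ℙ ≤ pstar :=
    p.integral_le_of_integral_pow_le_of_norm_eq_one he hint_d four_ne_zero hp hpstar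
  have hA : dnorm A ≤ Δ * pstar :=
    (p.map_integral_smul_le (fun _ => hΔfun _) (hint_Δ r) hint_d).trans
      (mul_le_mul_of_nonneg_left hmoment hΔ)
  have hB : dnorm B ≤ Δ * pstar :=
    (p.map_integral_smul_le (fun _ => hΔfun _) hint_Δ' hint_d).trans
      (mul_le_mul_of_nonneg_left hmoment hΔ)
  calc dnorm ((∫ ω, est ω ∂ℙ) - gradF) = (n : ℝ) / (2 * r) * p (A - B) := by
        rw [hbias, hdsmul, abs_of_nonneg (by positivity)]; rfl
    _ ≤ (n : ℝ) / (2 * r) * (Δ * pstar + Δ * pstar) := by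
        gcongr
        exact (map_sub_le_add p A B).trans (add_le_add hA hB)
    _ = n * Δ * pstar / r := by field_simp; ring

/-- Bias of the two-point zeroth-order estimator
`f̃'_r(x,ξ,e) = (n/(2r))(f̃(x+re,ξ) − f̃(x−re,ξ)) e` (where `f̃(z,ξ) = f(z,ξ) + Δ(z)` with
`|Δ(z)| ≤ Δ`) relative to the gradient `∇F(x) = 𝔼_e[(n/r) f(x+re) e]` of the smoothed
function: `‖𝔼[f̃'_r(x,ξ,e)] − ∇F(x)‖_* ≤ n Δ p_*/r`, where `(𝔼‖e‖_*⁴)^{1/4} ≤ p_*`. -/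
theorem two_point_estimator_bias {n : ℕ} {Ω : Type*} [MeasurableSpace Ω]
    (ℙ : Measure Ω) [IsProbabilityMeasure ℙ]
    (e : Ω → EuclideanSpace ℝ (Fin n))
    (he : ∀ᵐ ω ∂ℙ, ‖e ω‖ = 1)
    (r Δ pstar : ℝ) (hr : 0 < r) (hΔ : 0 ≤ Δ) (hp : 0 ≤ pstar)
    -- the dual norm ‖·‖_* of the chosen norm ‖·‖
    (dnorm : EuclideanSpace ℝ (Fin n) → ℝ)
    (hd0 : ∀ x, 0 ≤ dnorm x)
    (hdadd : ∀ x y, dnorm (x + y) ≤ dnorm x + dnorm y)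
    (hdsmul : ∀ (c : ℝ) x, dnorm (c • x) = |c| * dnorm x)
    (hpstar : ∫ ω, (dnorm (e ω)) ^ 4 ∂ℙ ≤ pstar ^ 4)
    (f : EuclideanSpace ℝ (Fin n) → ℝ)
    (fξ : EuclideanSpace ℝ (Fin n) → Ω → ℝ)   -- stochastic realizations f(z,ξ)
    (hmean : ∀ z, ∫ ω, fξ z ω ∂ℙ = f z)
    (Δfun : EuclideanSpace ℝ (Fin n) → ℝ) (hΔfun : ∀ z, |Δfun z| ≤ Δ)
    (x : EuclideanSpace ℝ (Fin n))
    -- the noise ξ is independent of e and unbiased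
    (hnoise : ∀ c : ℝ, ∫ ω, (fξ (x + c • e ω) ω) • e ω ∂ℙ =
      ∫ ω, (f (x + c • e ω)) • e ω ∂ℙ)
    -- the direction e is symmetrically distributed
    (hsym : ∫ ω, (f (x - r • e ω)) • e ω ∂ℙ = - ∫ ω, (f (x + r • e ω)) • e ω ∂ℙ)
    (est : Ω → EuclideanSpace ℝ (Fin n))
    (hest : ∀ ω, est ω = ((n : ℝ) / (2 * r) *
      ((fξ (x + r • e ω) ω + Δfun (x + r • e ω)) -
       (fξ (x - r • e ω) ω + Δfun (x - r • e ω)))) • e ω)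
    (gradF : EuclideanSpace ℝ (Fin n))
    (hgradF : gradF = ∫ ω, ((n : ℝ) / r * f (x + r • e ω)) • e ω ∂ℙ)
    (hint_est : Integrable est ℙ)
    (hint_f : ∀ c : ℝ, Integrable (fun ω => (f (x + c • e ω)) • e ω) ℙ)
    (hint_fξ : ∀ c : ℝ, Integrable (fun ω => (fξ (x + c • e ω) ω) • e ω) ℙ)
    (hint_Δ : ∀ c : ℝ, Integrable (fun ω => (Δfun (x + c • e ω)) • e ω) ℙ)
    (hint_d : Integrable (fun ω => dnorm (e ω)) ℙ) :
    dnorm ((∫ ω, est ω ∂ℙ) - gradF) ≤ n * Δ * pstar / r :=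
  two_point_estimator_bias_general ℙ e he r Δ pstar hr hΔ hp dnorm hdadd hdsmul hpstar f fξ Δfun
    hΔfun x hnoise hsym est hest gradF hgradF hint_fξ hint_Δ hint_d
end
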